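/- W⁰_max = {w ∈ W⁰ : w⁻¹(α) ∈ Δ(≤1) for all α ∈ Π}, where W⁰_max = {w_{I,max} : I a lower ideal of Δ(1)} and Δ(≤1) = ⊔_{j≤1} Δ(j). -/

import Mathlib

open RealInnerProductSpace

variable {V : Type*} [NormedAddCommGroup V] [InnerProductSpace ℝ V] [FiniteDimensional ℝ V]

/-- The orthogonal reflection in the hyperplane orthogonal to `α`. -/
noncomputable def sref (α : V) : V ≃ₗ[ℝ] V :=
  (Submodule.reflection ((ℝ ∙ α)ᗮ)).toLinearEquiv

/-- `Δ` is an (irreducible, crystallographic, reduced) root system, equipped with a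
`ℤ`-grading `d` (so that `Δ(i) = {γ ∈ Δ | d γ = i}`) and a compatible set `Pos = Δ⁺`
of positive roots (compatibility: every root of level `≥ 1` is positive). -/
structure GradedRootSystem (Δ : Set V) (d : V → ℤ) (Pos : Set V) : Prop where
  finite : Δ.Finite
  span_top : Submodule.span ℝ Δ = ⊤
  nonzero : ∀ α ∈ Δ, α ≠ 0
  neg_mem : ∀ α ∈ Δ, -α ∈ Δ
  reduced : ∀ α ∈ Δ, ∀ c : ℝ, c • α ∈ Δ → c = 1 ∨ c = -1
  reflect_mem : ∀ α ∈ Δ, ∀ β ∈ Δ, β - (2 * ⟪β, α⟫ / ⟪α, α⟫) • α ∈ Δ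
  crystallographic : ∀ α ∈ Δ, ∀ β ∈ Δ, ∃ n : ℤ, (n : ℝ) = 2 * ⟪β, α⟫ / ⟪α, α⟫
  irreducible : ∀ Δ₁ Δ₂ : Set V, Δ = Δ₁ ∪ Δ₂ → (∀ a ∈ Δ₁, ∀ b ∈ Δ₂, ⟪a, b⟫ = 0) →
    Δ₁ = ∅ ∨ Δ₂ = ∅
  grade_add : ∀ γ₁ ∈ Δ, ∀ γ₂ ∈ Δ, γ₁ + γ₂ ∈ Δ → d (γ₁ + γ₂) = d γ₁ + d γ₂
  grade_neg : ∀ γ ∈ Δ, d (-γ) = - d γ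
  pos_subset : Pos ⊆ Δ
  pos_iff : ∀ γ ∈ Δ, (γ ∈ Pos ↔ -γ ∉ Pos)
  pos_add : ∀ γ₁ ∈ Pos, ∀ γ₂ ∈ Pos, γ₁ + γ₂ ∈ Δ → γ₁ + γ₂ ∈ Pos
  compatible : ∀ γ ∈ Δ, 1 ≤ d γ → γ ∈ Pos

/-- The level set `Δ(i)` of the grading. -/
def level (Δ : Set V) (d : V → ℤ) (i : ℤ) : Set V := {γ ∈ Δ | d γ = i}

/-- `Δ(≥ k)`. -/
def levelGE (Δ : Set V) (d : V → ℤ) (k : ℤ) : Set V := {γ ∈ Δ | k ≤ d γ}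

/-- `Δ(≤ k)`. -/
def levelLE (Δ : Set V) (d : V → ℤ) (k : ℤ) : Set V := {γ ∈ Δ | d γ ≤ k}

/-- `Δ(0)⁺`, the positive part of `Δ(0)`. -/
def pos0 (d : V → ℤ) (Pos : Set V) : Set V := {γ ∈ Pos | d γ = 0}

/-- The simple roots of a positive system `P`: positive roots that are not the sum
of two positive roots. -/
def simpleRoots (P : Set V) : Set V := {γ ∈ P | ¬ ∃ a ∈ P, ∃ b ∈ P, γ = a + b}

/-- `idealPow Δ I k = I^k`, with `I¹ = I` and `I^{k+1} = (I + I^k) ∩ Δ`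
(and `I⁰ = ∅` by convention). -/
def idealPow (Δ I : Set V) : ℕ → Set V
  | 0 => ∅
  | 1 => I
  | (k+2) => {x ∈ Δ | ∃ a ∈ I, ∃ b ∈ idealPow Δ I (k+1), x = a + b}

/-- `⟨I⟩ = ⋃_{k ≥ 1} I^k`. -/
def gen (Δ I : Set V) : Set V := ⋃ k : ℕ, idealPow Δ I (k+1)

/-- A subset `M` of roots is closed if it is closed under root addition. -/
def IsClosedSubset (Δ M : Set V) : Prop :=
  ∀ γ₁ ∈ M, ∀ γ₂ ∈ M, γ₁ + γ₂ ∈ Δ → γ₁ + γ₂ ∈ M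

/-- Bi-convexity of `M ⊆ Δ⁺`: both `M` and `Δ⁺ \ M` are closed. -/
def IsBiConvex (Δ Pos M : Set V) : Prop :=
  IsClosedSubset Δ M ∧ IsClosedSubset Δ (Pos \ M)

/-- The partial order on each level `Δ(i)`: `γ' ≼ γ` iff `γ - γ'` is a nonnegative
integral combination of the simple roots `Π(0)` of `Δ(0)⁺`. -/
def leLevel (d : V → ℤ) (Pos : Set V) (γ' γ : V) : Prop :=
  γ - γ' ∈ AddSubmonoid.closure (simpleRoots (pos0 d Pos))

/-- A lower ideal of the weight poset `Δ(i)`. -/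
def IsLowerIdeal (Δ : Set V) (d : V → ℤ) (Pos : Set V) (i : ℤ) (I : Set V) : Prop :=
  I ⊆ level Δ d i ∧ ∀ γ ∈ I, ∀ ν ∈ level Δ d i, leLevel d Pos ν γ → ν ∈ I

/-- An upper ideal of the weight poset `Δ(i)`. -/
def IsUpperIdeal (Δ : Set V) (d : V → ℤ) (Pos : Set V) (i : ℤ) (I : Set V) : Prop :=
  I ⊆ level Δ d i ∧ ∀ γ ∈ I, ∀ ν ∈ level Δ d i, leLevel d Pos γ ν → ν ∈ I

/-- The Weyl group of the set of roots `S`: the subgroup of `GL(V)` generated by the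
reflections `s_α`, `α ∈ S`. -/
noncomputable def weyl (S : Set V) : Subgroup (V ≃ₗ[ℝ] V) :=
  Subgroup.closure {g | ∃ α ∈ S, g = sref α}

/-- The inversion set `N(w) = {γ ∈ Δ⁺ | -w(γ) ∈ Δ⁺}`. -/
def invSet (Pos : Set V) (w : V ≃ₗ[ℝ] V) : Set V := {γ ∈ Pos | -(w γ) ∈ Pos}

/-- `W⁰`, the minimal length coset representatives of `W/W(0)`:
elements of `W` sending `Δ(0)⁺` into `Δ⁺`. -/
noncomputable def W0 (Δ : Set V) (d : V → ℤ) (Pos : Set V) : Set (V ≃ₗ[ℝ] V) :=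
  {w | w ∈ weyl Δ ∧ ∀ γ ∈ pos0 d Pos, w γ ∈ Pos}

/-- `W⁰_min`: the set of elements `w ∈ W⁰` that are of minimal length in the fiber
`τ⁻¹(N(w) ∩ Δ(1))`, i.e. the minimal elements `w_{I,min}` of all lower ideals `I`. -/
noncomputable def Wmin (Δ : Set V) (d : V → ℤ) (Pos : Set V) : Set (V ≃ₗ[ℝ] V) :=
  {w ∈ W0 Δ d Pos | ∀ w' ∈ W0 Δ d Pos,
    invSet Pos w' ∩ level Δ d 1 = invSet Pos w ∩ level Δ d 1 →
    invSet Pos w ⊆ invSet Pos w'}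

/-- `W⁰_max`: the set of elements `w ∈ W⁰` that are of maximal length in the fiber
`τ⁻¹(N(w) ∩ Δ(1))`, i.e. the maximal elements `w_{I,max}` of all lower ideals `I`. -/
noncomputable def Wmax (Δ : Set V) (d : V → ℤ) (Pos : Set V) : Set (V ≃ₗ[ℝ] V) :=
  {w ∈ W0 Δ d Pos | ∀ w' ∈ W0 Δ d Pos,
    invSet Pos w' ∩ level Δ d 1 = invSet Pos w ∩ level Δ d 1 →
    invSet Pos w' ⊆ invSet Pos w}

/-!
If `w⁻¹ α` has degree `≥ 2` for a simple root `α`, then `s_α w` lies in `W⁰`, has the same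
inversions of degree one as `w`, and in addition inverts `w⁻¹ α`; so `w` is not maximal.

Conversely, let `w⁻¹(Π) ⊆ Δ(≤ 1)`. Peeling a simple root off `w γ` shows, by induction on
the height of `w γ`, that every root `γ` of degree `≥ 2` with `w γ > 0` is `ε + (γ - ε)` with
`ε ∈ Δ(1)` and `w ε`, `w (γ - ε)` both positive. For `w'` in the same fiber, the closed set
`Δ⁺ \ N(w')` contains every `ν ∈ Δ(1)` with `w ν > 0`, hence every `γ ∈ Δ(≥ 1)` with
`w γ > 0`; that is, `N(w') ⊆ N(w)`.
-/

set_option linter.unusedSectionVars false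

lemma sref_apply (α x : V) : sref α x = x - (2 * ⟪x, α⟫ / ⟪α, α⟫) • α := by
  show Submodule.reflection ((ℝ ∙ α)ᗮ) x = _
  rw [Submodule.reflection_orthogonal_apply, Submodule.reflection_singleton_apply,
    real_inner_self_eq_norm_sq, real_inner_comm]
  simp only [RCLike.ofReal_real_eq_id, id]
  match_scalars <;> ring

lemma sref_self {α : V} (hα : α ≠ 0) : sref α α = -α := by
  have : ⟪α, α⟫ ≠ 0 := inner_self_ne_zero.mpr hα
  rw [sref_apply, mul_div_assoc, div_self this]
  module

lemma sref_mem_weyl {S : Set V} {α : V} (hα : α ∈ S) : sref α ∈ weyl S :=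
  Subgroup.subset_closure ⟨α, hα, rfl⟩

lemma sref_apply_of_pairing {α x : V} {c : ℝ} (hc : 2 * ⟪x, α⟫ / ⟪α, α⟫ = c) :
    sref α x = x - c • α := by
  rw [sref_apply, hc]

lemma pairing_add_self {α : V} (hα : α ≠ 0) (x : V) :
    2 * ⟪x + α, α⟫ / ⟪α, α⟫ = 2 * ⟪x, α⟫ / ⟪α, α⟫ + 2 := by
  have : ⟪α, α⟫ ≠ 0 := inner_self_ne_zero.mpr hα
  rw [inner_add_left]
  field_simp

lemma pairing_sub_self {α : V} (hα : α ≠ 0) (x : V) :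
    2 * ⟪x - α, α⟫ / ⟪α, α⟫ = 2 * ⟪x, α⟫ / ⟪α, α⟫ - 2 := by
  have : ⟪α, α⟫ ≠ 0 := inner_self_ne_zero.mpr hα
  rw [inner_sub_left]
  field_simp

/-- The simple roots are not known to form a basis here, so the height of `x` counts the positive
roots below `x` in the order of the cone spanned by `Pos`; it drops strictly along that order
because the cone is pointed (`eq_zero_of_mem_closure_of_neg_mem_closure`). -/
noncomputable def posHeight (Pos : Set V) (x : V) : ℕ :=
  {y ∈ Pos | x - y ∈ AddSubmonoid.closure Pos}.ncard

def HasLevelOneSummand (Δ : Set V) (d : V → ℤ) (Pos : Set V) (w : V ≃ₗ[ℝ] V) (γ : V) : Prop :=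
  ∃ ε ∈ level Δ d 1, w ε ∈ Pos ∧ γ - ε ∈ Δ ∧ w (γ - ε) ∈ Pos

namespace GradedRootSystem

variable {Δ : Set V} {d : V → ℤ} {Pos : Set V}

lemma inner_self_pos (h : GradedRootSystem Δ d Pos) {α : V} (hα : α ∈ Δ) : 0 < ⟪α, α⟫ :=
  real_inner_self_pos.mpr (h.nonzero α hα)

lemma neg_notMem_pos (h : GradedRootSystem Δ d Pos) {γ : V} (hγ : γ ∈ Pos) : -γ ∉ Pos :=
  (h.pos_iff γ (h.pos_subset hγ)).mp hγ

lemma neg_mem_pos (h : GradedRootSystem Δ d Pos) {γ : V} (hγ : γ ∈ Δ) (hn : γ ∉ Pos) :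
    -γ ∈ Pos :=
  not_not.mp (mt (h.pos_iff γ hγ).mpr hn)

lemma add_ne_zero_of_mem_pos (h : GradedRootSystem Δ d Pos) {x y : V} (hx : x ∈ Pos)
    (hy : y ∈ Pos) : x + y ≠ 0 := fun hxy =>
  h.neg_notMem_pos hx (neg_eq_of_add_eq_zero_right hxy ▸ hy)

lemma grade_nonneg (h : GradedRootSystem Δ d Pos) {γ : V} (hγ : γ ∈ Pos) : 0 ≤ d γ := by
  by_contra! hneg
  have hγΔ := h.pos_subset hγ
  exact h.neg_notMem_pos hγ
    (h.compatible _ (h.neg_mem γ hγΔ) (by rw [h.grade_neg γ hγΔ]; omega))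

lemma inner_sq_lt (h : GradedRootSystem Δ d Pos) {α β : V} (hα : α ∈ Δ) (hβ : β ∈ Δ)
    (hne : β ≠ α) (hne' : β ≠ -α) : ⟪α, β⟫ ^ 2 < ⟪α, α⟫ * ⟪β, β⟫ := by
  refine lt_of_le_of_ne (by nlinarith [real_inner_mul_inner_self_le α β]) fun heq => ?_
  have habs : ‖⟪α, β⟫‖ = ‖α‖ * ‖β‖ := by
    rw [Real.norm_eq_abs, ← sq_eq_sq₀ (abs_nonneg _) (by positivity), sq_abs, heq,
      real_inner_self_eq_norm_sq, real_inner_self_eq_norm_sq]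
    ring
  obtain ⟨r, -, rfl⟩ := (norm_inner_eq_norm_iff (h.nonzero α hα) (h.nonzero β hβ)).mp habs
  rcases h.reduced α hα r hβ with rfl | rfl
  · exact hne (one_smul ℝ α)
  · exact hne' (neg_one_smul ℝ α)

lemma cartan_mul_lt_four (h : GradedRootSystem Δ d Pos) {α β : V} (hα : α ∈ Δ) (hβ : β ∈ Δ)
    (hne : β ≠ α) (hne' : β ≠ -α) {n m : ℤ} (hn : (n : ℝ) = 2 * ⟪β, α⟫ / ⟪α, α⟫)
    (hm : (m : ℝ) = 2 * ⟪α, β⟫ / ⟪β, β⟫) : n * m < 4 := by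
  have hαα := h.inner_self_pos hα
  have hββ := h.inner_self_pos hβ
  have hnm : (n * m : ℝ) = 4 * ⟪α, β⟫ ^ 2 / (⟪α, α⟫ * ⟪β, β⟫) := by
    rw [hn, hm, real_inner_comm α β]; field_simp; ring
  have : (n * m : ℝ) < 4 := by
    rw [hnm, div_lt_iff₀ (by positivity)]
    nlinarith [h.inner_sq_lt hα hβ hne hne']
  exact_mod_cast this

lemma add_mem_of_inner_neg (h : GradedRootSystem Δ d Pos) {x y : V} (hx : x ∈ Δ) (hy : y ∈ Δ)
    (hxy : ⟪x, y⟫ < 0) (hne : x + y ≠ 0) : x + y ∈ Δ := by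
  have hxx := h.inner_self_pos hx
  obtain ⟨n, hn⟩ := h.crystallographic x hx y hy
  obtain ⟨m, hm⟩ := h.crystallographic y hy x hx
  have hn0 : n < 0 := by
    have : (n : ℝ) < 0 := by rw [hn, real_inner_comm]; exact div_neg_of_neg_of_pos (by linarith) hxx
    exact_mod_cast this
  have hm0 : m < 0 := by
    have : (m : ℝ) < 0 := by
      rw [hm]; exact div_neg_of_neg_of_pos (by linarith) (h.inner_self_pos hy)
    exact_mod_cast this
  have hyx : y ≠ x := by rintro rfl; linarith
  have hyx' : y ≠ -x := fun e => hne (by rw [e, add_neg_cancel])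
  have h4 := h.cartan_mul_lt_four hx hy hyx hyx' hn hm
  have : n = -1 ∨ m = -1 := by
    by_contra! hc
    nlinarith [show n ≤ -2 by omega, show m ≤ -2 by omega]
  rcases this with rfl | rfl
  · have := h.reflect_mem x hx y hy
    rwa [← hn, Int.cast_neg, Int.cast_one, neg_one_smul, sub_neg_eq_add, add_comm] at this
  · have := h.reflect_mem y hy x hx
    rwa [← hm, Int.cast_neg, Int.cast_one, neg_one_smul, sub_neg_eq_add] at this

lemma inner_nonneg_of_add_notMem (h : GradedRootSystem Δ d Pos) {x y : V} (hx : x ∈ Δ)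
    (hy : y ∈ Δ) (hne : x + y ≠ 0) (hxy : x + y ∉ Δ) : 0 ≤ ⟪x, y⟫ :=
  not_lt.mp fun hlt => hxy (h.add_mem_of_inner_neg hx hy hlt hne)

lemma add_mem_or_add_mem (h : GradedRootSystem Δ d Pos) {a₁ a₂ b : V} (h₁ : a₁ ∈ Δ)
    (h₂ : a₂ ∈ Δ) (hb : b ∈ Δ) (h₁₂ : a₁ + a₂ ∈ Δ) (hs : a₁ + a₂ + b ∈ Δ)
    (hn₁ : a₁ + b ≠ 0) (hn₂ : a₂ + b ≠ 0) : a₁ + b ∈ Δ ∨ a₂ + b ∈ Δ := by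
  by_contra! ⟨hc₁, hc₂⟩
  have e₁ : a₁ + a₂ + b + -a₁ = a₂ + b := by abel
  have e₂ : a₁ + a₂ + b + -a₂ = a₁ + b := by abel
  have i₁ := h.inner_nonneg_of_add_notMem h₁ hb hn₁ hc₁
  have i₂ := h.inner_nonneg_of_add_notMem h₂ hb hn₂ hc₂
  have k₁ := h.inner_nonneg_of_add_notMem hs (h.neg_mem _ h₁) (e₁ ▸ hn₂) (e₁ ▸ hc₂)
  have k₂ := h.inner_nonneg_of_add_notMem hs (h.neg_mem _ h₂) (e₂ ▸ hn₁) (e₂ ▸ hc₁)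
  have hpos := h.inner_self_pos h₁₂
  simp only [inner_neg_right, inner_add_left, inner_add_right] at k₁ k₂ hpos
  rw [real_inner_comm a₁ a₂, real_inner_comm b a₁, real_inner_comm b a₂] at *
  linarith

lemma multiset_eq_zero_of_sum_eq_zero (h : GradedRootSystem Δ d Pos) :
    ∀ l : Multiset V, (∀ a ∈ l, a ∈ Pos) → l.sum = 0 → l = 0 := by
  classical
  intro l
  induction hcard : Multiset.card l using Nat.strong_induction_on generalizing l with
  | _ n IH =>
  intro hl hsum
  by_contra hne
  obtain ⟨a, ha⟩ := Multiset.exists_mem_of_ne_zero hne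
  obtain ⟨t, rfl⟩ := Multiset.exists_cons_of_mem ha
  have haP := hl a (Multiset.mem_cons_self a t)
  have htP : ∀ b ∈ t, b ∈ Pos := fun b hb => hl b (Multiset.mem_cons_of_mem hb)
  rw [Multiset.sum_cons] at hsum
  obtain ⟨b, hbt, hab⟩ : ∃ b ∈ t, ⟪a, b⟫ < 0 := by
    by_contra! hc
    have : ⟪a, t.sum⟫ = (t.map fun b => ⟪a, b⟫).sum := by
      simpa using map_multiset_sum (innerSL ℝ a) t
    have : ⟪a, t.sum⟫ = -⟪a, a⟫ := by rw [eq_neg_of_add_eq_zero_right hsum, inner_neg_right]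
    have := h.inner_self_pos (h.pos_subset haP)
    linarith [Multiset.sum_nonneg (s := t.map fun b => ⟪a, b⟫) (by simpa using hc)]
  have hbP := htP b hbt
  have habP : a + b ∈ Pos := h.pos_add a haP b hbP
    (h.add_mem_of_inner_neg (h.pos_subset haP) (h.pos_subset hbP) hab
      (h.add_ne_zero_of_mem_pos haP hbP))
  obtain ⟨s, rfl⟩ := Multiset.exists_cons_of_mem hbt
  -- merging `a` and `b` into the positive root `a + b` gives a shorter vanishing sum
  refine Multiset.cons_ne_zero (IH _ ?_ ((a + b) ::ₘ s) rfl ?_ ?_)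
  · simp [← hcard]
  · simpa [habP] using fun c hc => htP c (Multiset.mem_cons_of_mem hc)
  · rw [Multiset.sum_cons, ← hsum, Multiset.sum_cons, add_assoc]

lemma eq_zero_of_mem_closure_of_neg_mem_closure (h : GradedRootSystem Δ d Pos) {x : V}
    (hx : x ∈ AddSubmonoid.closure Pos) (hx' : -x ∈ AddSubmonoid.closure Pos) : x = 0 := by
  obtain ⟨l, hl, rfl⟩ := AddSubmonoid.exists_multiset_of_mem_closure hx
  obtain ⟨l', hl', hsum⟩ := AddSubmonoid.exists_multiset_of_mem_closure hx'
  have hzero := h.multiset_eq_zero_of_sum_eq_zero (l + l')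
    (fun a ha => (Multiset.mem_add.mp ha).elim (hl a) (hl' a))
    (by rw [Multiset.sum_add, hsum]; exact add_neg_cancel _)
  rw [(add_eq_zero.mp hzero).1, Multiset.sum_zero]

lemma posHeight_lt (h : GradedRootSystem Δ d Pos) {a δ : V} (hδ : δ ∈ Pos)
    (hsub : δ - a ∈ Pos) : posHeight Pos a < posHeight Pos δ := by
  have hsub' : δ - a ∈ AddSubmonoid.closure Pos := AddSubmonoid.subset_closure hsub
  refine Set.ncard_lt_ncard ⟨fun y ⟨hy, hay⟩ => ⟨hy, ?_⟩, fun hsubset => ?_⟩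
    (h.finite.subset fun y hy => h.pos_subset hy.1)
  · exact sub_add_sub_cancel δ a y ▸ add_mem hsub' hay
  · have hδa : -(δ - a) ∈ AddSubmonoid.closure Pos := neg_sub δ a ▸ (hsubset ⟨hδ, by simp⟩).2
    exact h.nonzero _ (h.pos_subset hsub) (h.eq_zero_of_mem_closure_of_neg_mem_closure hsub' hδa)

lemma exists_simpleRoot_sub_mem (h : GradedRootSystem Δ d Pos) {δ : V} (hδ : δ ∈ Pos)
    (hns : δ ∉ simpleRoots Pos) : ∃ α ∈ simpleRoots Pos, δ - α ∈ Pos := by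
  obtain ⟨a₀, ha₀, b₀, hb₀, rfl⟩ := not_and.mp hns hδ |> not_not.mp
  obtain ⟨a, ⟨haP, hbP⟩, hmin⟩ := Set.exists_min_image {a | a ∈ Pos ∧ a₀ + b₀ - a ∈ Pos}
    (posHeight Pos) (h.finite.subset fun a ha => h.pos_subset ha.1)
    ⟨a₀, ha₀, by rwa [add_sub_cancel_left]⟩
  refine ⟨a, ⟨haP, ?_⟩, hbP⟩
  set b := a₀ + b₀ - a
  have hbΔ := h.pos_subset hbP
  have smaller_candidate : ∀ x ∈ Pos, ∀ y ∈ Pos, a = x + y → y + b ∉ Δ :=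
    fun x hx y hy hxy hyb => by
      have hxb : a₀ + b₀ - x = y + b := by rw [show b = a₀ + b₀ - a from rfl, hxy]; abel
      have := hmin x ⟨hx, hxb ▸ h.pos_add y hy b hbP hyb⟩
      have := h.posHeight_lt (a := x) haP (by rwa [hxy, add_sub_cancel_left])
      omega
  rintro ⟨a₁, h₁, a₂, h₂, rfl⟩
  have hsum : a₁ + a₂ + b = a₀ + b₀ := add_sub_cancel _ _
  rcases h.add_mem_or_add_mem (h.pos_subset h₁) (h.pos_subset h₂) hbΔ (h.pos_subset haP)
    (hsum ▸ h.pos_subset hδ) (h.add_ne_zero_of_mem_pos h₁ hbP)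
    (h.add_ne_zero_of_mem_pos h₂ hbP) with h₁b | h₂b
  · exact smaller_candidate a₂ h₂ a₁ h₁ (add_comm _ _) h₁b
  · exact smaller_candidate a₁ h₁ a₂ h₂ rfl h₂b

lemma sref_mem (h : GradedRootSystem Δ d Pos) {α x : V} (hα : α ∈ Δ) (hx : x ∈ Δ) :
    sref α x ∈ Δ := by
  rw [sref_apply]; exact h.reflect_mem α hα x hx

lemma sub_mem_pos_of_simple (h : GradedRootSystem Δ d Pos) {α x : V}
    (hα : α ∈ simpleRoots Pos) (hx : x ∈ Pos) (hxα : x - α ∈ Δ) : x - α ∈ Pos := by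
  by_contra hn
  have := h.neg_mem_pos hxα hn
  rw [neg_sub] at this
  exact hα.2 ⟨x, hx, α - x, this, by abel⟩

lemma sref_mem_pos_of_pairing_eq_neg (h : GradedRootSystem Δ d Pos) {α : V} (hα : α ∈ Pos)
    (k : ℕ) : ∀ x ∈ Pos, 2 * ⟪x, α⟫ / ⟪α, α⟫ = -k → sref α x ∈ Pos := by
  have hαΔ := h.pos_subset hα
  have hαα := h.inner_self_pos hαΔ
  induction k using Nat.twoStepInduction with
  | zero => intro x hx hk; simpa [sref_apply_of_pairing hk] using hx
  | one =>
    intro x hx hk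
    have hsref : sref α x = x + α := by simp [sref_apply_of_pairing hk]
    exact hsref ▸ h.pos_add x hx α hα (hsref ▸ h.sref_mem hαΔ (h.pos_subset hx))
  | more k ih _ =>
    intro x hx hk
    have hxα : ⟪x, α⟫ < 0 := by
      by_contra! hc
      have := div_nonneg (mul_nonneg zero_le_two hc) hαα.le
      push_cast at hk; linarith
    have hy : x + α ∈ Pos := h.pos_add x hx α hα <|
      h.add_mem_of_inner_neg (h.pos_subset hx) hαΔ hxα (h.add_ne_zero_of_mem_pos hx hα)
    have hsy := ih (x + α) hy (by rw [pairing_add_self (h.nonzero α hαΔ), hk]; push_cast; ring)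
    rw [map_add, sref_self (h.nonzero α hαΔ), ← sub_eq_add_neg] at hsy
    have := h.pos_add _ hsy α hα (by simpa using h.sref_mem hαΔ (h.pos_subset hx))
    simpa using this

lemma sref_mem_pos_of_pairing_eq_natCast (h : GradedRootSystem Δ d Pos) {α : V}
    (hα : α ∈ simpleRoots Pos) (k : ℕ) :
    ∀ x ∈ Pos, x ≠ α → 2 * ⟪x, α⟫ / ⟪α, α⟫ = k → sref α x ∈ Pos := by
  have hαΔ := h.pos_subset hα.1
  have hαα := h.inner_self_pos hαΔ
  induction k using Nat.twoStepInduction with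
  | zero => intro x hx _ hk; simpa [sref_apply_of_pairing hk] using hx
  | one =>
    intro x hx _ hk
    have hsref : sref α x = x - α := by simp [sref_apply_of_pairing hk]
    exact hsref ▸ h.sub_mem_pos_of_simple hα hx (hsref ▸ h.sref_mem hαΔ (h.pos_subset hx))
  | more k ih _ =>
    intro x hx hne hk
    have hxα : ⟪x, -α⟫ < 0 := by
      rw [inner_neg_right, neg_lt_zero]
      by_contra! hc
      have := div_nonpos_of_nonpos_of_nonneg (mul_nonpos_of_nonneg_of_nonpos zero_le_two hc) hαα.le
      push_cast at hk; linarith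
    have hy : x - α ∈ Pos := h.sub_mem_pos_of_simple hα hx <| sub_eq_add_neg x α ▸
      h.add_mem_of_inner_neg (h.pos_subset hx) (h.neg_mem α hαΔ) hxα
        (by rwa [← sub_eq_add_neg, sub_ne_zero])
    have hyα : x - α ≠ α := fun e => by
      have h2x : (2 : ℝ) • α ∈ Δ := by rw [two_smul, ← eq_add_of_sub_eq e]; exact h.pos_subset hx
      rcases h.reduced α hαΔ 2 h2x with h2 | h2 <;> norm_num at h2
    have hsy := ih (x - α) hy hyα (by rw [pairing_sub_self (h.nonzero α hαΔ), hk]; push_cast; ring)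
    rw [map_sub, sref_self (h.nonzero α hαΔ), sub_neg_eq_add] at hsy
    have := h.sub_mem_pos_of_simple hα hsy (by simpa using h.sref_mem hαΔ (h.pos_subset hx))
    simpa using this

lemma sref_mem_pos (h : GradedRootSystem Δ d Pos) {α x : V} (hα : α ∈ simpleRoots Pos)
    (hx : x ∈ Pos) (hne : x ≠ α) : sref α x ∈ Pos := by
  obtain ⟨c, hc⟩ := h.crystallographic α (h.pos_subset hα.1) x (h.pos_subset hx)
  obtain ⟨k, rfl | rfl⟩ := Int.eq_nat_or_neg c
  · exact h.sref_mem_pos_of_pairing_eq_natCast hα k x hx hne (by simpa using hc.symm)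
  · exact h.sref_mem_pos_of_pairing_eq_neg hα.1 k x hx (by simpa using hc.symm)

lemma sref_mem_pos_iff (h : GradedRootSystem Δ d Pos) {α x : V} (hα : α ∈ simpleRoots Pos)
    (hx : x ∈ Δ) (hne : x ≠ α) (hne' : x ≠ -α) : sref α x ∈ Pos ↔ x ∈ Pos := by
  refine ⟨fun hs => ?_, fun hxP => h.sref_mem_pos hα hxP hne⟩
  by_contra hxP
  have := h.sref_mem_pos hα (h.neg_mem_pos hx hxP) (fun e => hne' (neg_eq_iff_eq_neg.mp e))
  exact h.neg_notMem_pos hs (by rwa [map_neg] at this)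

lemma mem_of_mem_weyl (h : GradedRootSystem Δ d Pos) {w : V ≃ₗ[ℝ] V} (hw : w ∈ weyl Δ)
    {x : V} (hx : x ∈ Δ) : w x ∈ Δ := by
  induction hw using Subgroup.closure_induction'' generalizing x with
  | mem g hg => obtain ⟨α, hα, rfl⟩ := hg; exact h.sref_mem hα hx
  | inv_mem g hg => obtain ⟨α, hα, rfl⟩ := hg; exact h.sref_mem hα hx
  | one => exact hx
  | mul g₁ g₂ _ _ ih₁ ih₂ => exact ih₁ (ih₂ hx)

lemma symm_mem_of_mem_weyl (h : GradedRootSystem Δ d Pos) {w : V ≃ₗ[ℝ] V} (hw : w ∈ weyl Δ)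
    {x : V} (hx : x ∈ Δ) : w.symm x ∈ Δ :=
  h.mem_of_mem_weyl (inv_mem hw) hx

lemma apply_add_mem_pos (h : GradedRootSystem Δ d Pos) {w : V ≃ₗ[ℝ] V} (hw : w ∈ weyl Δ)
    {x y : V} (hxy : x + y ∈ Δ) (hx : w x ∈ Pos) (hy : w y ∈ Pos) : w (x + y) ∈ Pos := by
  rw [map_add]
  exact h.pos_add _ hx _ hy (map_add w x y ▸ h.mem_of_mem_weyl hw hxy)

lemma hasLevelOneSummand_add (h : GradedRootSystem Δ d Pos) {w : V ≃ₗ[ℝ] V}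
    (hw : w ∈ weyl Δ) {m : ℕ}
    (hm : ∀ μ ∈ Δ, posHeight Pos (w μ) ≤ m → 2 ≤ d μ → w μ ∈ Pos →
      HasLevelOneSummand Δ d Pos w μ)
    {ξ μ : V} (hξ : ξ ∈ Δ) (hμ : μ ∈ Δ) (hξμ : ξ + μ ∈ Δ) (hdξ : d ξ ≤ 1)
    (hd : 2 ≤ d (ξ + μ)) (hwξ : w ξ ∈ Pos) (hwμ : w μ ∈ Pos) (hμm : posHeight Pos (w μ) ≤ m) :
    HasLevelOneSummand Δ d Pos w (ξ + μ) := by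
  induction hn : posHeight Pos (w μ) using Nat.strong_induction_on generalizing ξ μ with
  | _ n ih =>
  have hdξμ := h.grade_add ξ hξ μ hμ hξμ
  by_cases hξ₁ : d ξ = 1
  · exact ⟨ξ, ⟨hξ, hξ₁⟩, hwξ, by simpa using hμ, by simpa using hwμ⟩
  -- Split `μ = ε + ρ`; either `ε` is absorbed into `ξ` (and we recurse on `ρ`) or `ρ` is.
  obtain ⟨ε, ⟨hε, hdε⟩, hwε, hρ, hwρ⟩ := hm μ hμ hμm (by omega) hwμ
  have hερ : ε + (μ - ε) = μ := add_sub_cancel ε μ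
  have hdμ := h.grade_add ε hε _ hρ (by rwa [hερ])
  rw [hερ] at hdμ
  have hne : ∀ x, w x ∈ Pos → x + ξ ≠ 0 := fun x hx e => h.add_ne_zero_of_mem_pos hx hwξ
    (by rw [← map_add, e, map_zero])
  rcases h.add_mem_or_add_mem hε hρ hξ (by rwa [hερ]) (by rwa [hερ, add_comm])
    (hne ε hwε) (hne _ hwρ) with hεξ | hρξ
  · rw [add_comm] at hεξ
    have hsum : ξ + μ = (ξ + ε) + (μ - ε) := by rw [add_assoc, hερ]
    have hlt : posHeight Pos (w (μ - ε)) < n := hn ▸ h.posHeight_lt hwμ (by simpa using hwε)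
    rw [hsum] at hξμ hd ⊢
    exact ih _ hlt hεξ hρ hξμ (by rw [h.grade_add ξ hξ ε hε hεξ]; omega) hd
      (h.apply_add_mem_pos hw hεξ hwξ hwε) hwρ (by omega) rfl
  · have hsub : ξ + μ - ε = ξ + (μ - ε) := by abel
    rw [add_comm] at hρξ
    exact ⟨ε, ⟨hε, hdε⟩, hwε, hsub ▸ hρξ, hsub ▸ h.apply_add_mem_pos hw hρξ hwξ hwρ⟩

lemma hasLevelOneSummand (h : GradedRootSystem Δ d Pos) {w : V ≃ₗ[ℝ] V} (hw : w ∈ weyl Δ)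
    (hsimple : ∀ α ∈ simpleRoots Pos, w.symm α ∈ levelLE Δ d 1) {γ : V} (hγ : γ ∈ Δ)
    (hd : 2 ≤ d γ) (hwγ : w γ ∈ Pos) : HasLevelOneSummand Δ d Pos w γ := by
  induction hn : posHeight Pos (w γ) using Nat.strong_induction_on generalizing γ with
  | _ n ih =>
  have hns : w γ ∉ simpleRoots Pos := fun hs => by
    have := (hsimple _ hs).2
    rw [LinearEquiv.symm_apply_apply] at this
    omega
  obtain ⟨α, hα, hsub⟩ := h.exists_simpleRoot_sub_mem hwγ hns
  have hξ := h.symm_mem_of_mem_weyl hw (h.pos_subset hα.1)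
  set ξ := w.symm α
  have hwμ : w (γ - ξ) = w γ - α := by rw [map_sub, LinearEquiv.apply_symm_apply]
  have hμ : γ - ξ ∈ Δ := by
    have := h.symm_mem_of_mem_weyl hw (h.pos_subset hsub)
    rwa [← hwμ, LinearEquiv.symm_apply_apply] at this
  have hlt : posHeight Pos (w (γ - ξ)) < n := hn ▸ hwμ ▸ h.posHeight_lt hwγ (by simpa using hα.1)
  have := h.hasLevelOneSummand_add hw (m := posHeight Pos (w (γ - ξ)))
    (fun μ hμ hμm hdμ hwμ => ih _ (by omega) hμ hdμ hwμ rfl) hξ hμ (by simpa using hγ)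
    (hsimple α hα).2 (by simpa using hd) (by simpa [ξ] using hα.1) (hwμ ▸ hsub) le_rfl
  simpa using this

lemma mem_of_isClosedSubset (h : GradedRootSystem Δ d Pos) {w : V ≃ₗ[ℝ] V} (hw : w ∈ weyl Δ)
    (hsimple : ∀ α ∈ simpleRoots Pos, w.symm α ∈ levelLE Δ d 1) {M : Set V}
    (hM : IsClosedSubset Δ M) (hM₁ : ∀ ν ∈ level Δ d 1, w ν ∈ Pos → ν ∈ M) {γ : V}
    (hγ : γ ∈ Δ) (hd : 1 ≤ d γ) (hwγ : w γ ∈ Pos) : γ ∈ M := by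
  induction hn : (d γ).toNat using Nat.strong_induction_on generalizing γ with
  | _ n ih =>
  by_cases hγ₁ : d γ = 1
  · exact hM₁ γ ⟨hγ, hγ₁⟩ hwγ
  obtain ⟨ε, ⟨hε, hdε⟩, hwε, hρ, hwρ⟩ := h.hasLevelOneSummand hw hsimple hγ (by omega) hwγ
  have hερ : ε + (γ - ε) = γ := add_sub_cancel ε γ
  have hdγ := h.grade_add ε hε _ hρ (by rwa [hερ])
  rw [hερ] at hdγ
  exact hερ ▸ hM ε (hM₁ ε ⟨hε, hdε⟩ hwε) _ (ih _ (by omega) hρ (by omega) hwρ rfl) (by rwa [hερ])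

lemma mem_pos_diff_invSet_iff (h : GradedRootSystem Δ d Pos) {w : V ≃ₗ[ℝ] V}
    (hw : w ∈ weyl Δ) {γ : V} : γ ∈ Pos \ invSet Pos w ↔ γ ∈ Pos ∧ w γ ∈ Pos := by
  simp only [Set.mem_sdiff, invSet, Set.mem_ofPred_eq, not_and]
  exact and_congr_right fun hγ =>
    ⟨fun hn => (h.pos_iff _ (h.mem_of_mem_weyl hw (h.pos_subset hγ))).mpr (hn hγ),
      fun hwγ _ => h.neg_notMem_pos hwγ⟩

lemma isClosedSubset_pos_diff_invSet (h : GradedRootSystem Δ d Pos) {w : V ≃ₗ[ℝ] V}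
    (hw : w ∈ weyl Δ) : IsClosedSubset Δ (Pos \ invSet Pos w) := by
  intro x hx y hy hxy
  rw [h.mem_pos_diff_invSet_iff hw] at hx hy ⊢
  exact ⟨h.pos_add x hx.1 y hy.1 hxy, h.apply_add_mem_pos hw hxy hx.2 hy.2⟩

lemma one_le_grade_of_mem_invSet (h : GradedRootSystem Δ d Pos) {w : V ≃ₗ[ℝ] V}
    (hw : w ∈ W0 Δ d Pos) {γ : V} (hγ : γ ∈ invSet Pos w) : 1 ≤ d γ := by
  rcases (h.grade_nonneg hγ.1).lt_or_eq with hpos | hzero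
  · exact hpos
  · exact absurd hγ.2 (h.neg_notMem_pos (hw.2 γ ⟨hγ.1, hzero.symm⟩))

lemma invSet_subset_of_levelLE (h : GradedRootSystem Δ d Pos) {w w' : V ≃ₗ[ℝ] V}
    (hw : w ∈ weyl Δ) (hsimple : ∀ α ∈ simpleRoots Pos, w.symm α ∈ levelLE Δ d 1)
    (hw' : w' ∈ W0 Δ d Pos)
    (hI : invSet Pos w' ∩ level Δ d 1 = invSet Pos w ∩ level Δ d 1) :
    invSet Pos w' ⊆ invSet Pos w := by
  intro γ hγ
  have hγΔ := h.pos_subset hγ.1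
  refine ⟨hγ.1, not_not.mp fun hn => ?_⟩
  have hM₁ : ∀ ν ∈ level Δ d 1, w ν ∈ Pos → ν ∈ Pos \ invSet Pos w' := fun ν hν hwν =>
    ⟨h.compatible ν hν.1 hν.2.ge, fun hν' => h.neg_notMem_pos hwν (hI.subset ⟨hν', hν⟩).1.2⟩
  exact (h.mem_of_isClosedSubset hw hsimple (h.isClosedSubset_pos_diff_invSet hw'.1) hM₁ hγΔ
    (h.one_le_grade_of_mem_invSet hw' hγ) ((h.pos_iff _ (h.mem_of_mem_weyl hw hγΔ)).mpr hn)).2 hγ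

lemma sref_mul_apply_mem_pos_iff (h : GradedRootSystem Δ d Pos) {w : V ≃ₗ[ℝ] V}
    (hw : w ∈ weyl Δ) {α : V} (hα : α ∈ simpleRoots Pos) {γ : V} (hγ : γ ∈ Δ)
    (hne : γ ≠ w.symm α) (hne' : γ ≠ -w.symm α) : (sref α * w) γ ∈ Pos ↔ w γ ∈ Pos :=
  h.sref_mem_pos_iff hα (h.mem_of_mem_weyl hw hγ)
    (fun e => hne (w.eq_symm_apply.mpr e))
    (fun e => hne' (by rw [← map_neg]; exact w.eq_symm_apply.mpr e))

lemma symm_mem_levelLE_of_mem_Wmax (h : GradedRootSystem Δ d Pos) {w : V ≃ₗ[ℝ] V}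
    (hw : w ∈ Wmax Δ d Pos) {α : V} (hα : α ∈ simpleRoots Pos) :
    w.symm α ∈ levelLE Δ d 1 := by
  have hαΔ := h.pos_subset hα.1
  have hβ := h.symm_mem_of_mem_weyl hw.1.1 hαΔ
  refine ⟨hβ, not_lt.mp fun hdβ => ?_⟩
  set w' := sref α * w
  have hw'W : w' ∈ weyl Δ := mul_mem (sref_mem_weyl hαΔ) hw.1.1
  have hpres : ∀ γ ∈ Δ, |d γ| ≤ 1 → (w' γ ∈ Pos ↔ w γ ∈ Pos) := fun γ hγ hdγ =>
    h.sref_mul_apply_mem_pos_iff hw.1.1 hα hγ (by rintro rfl; grind)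
      (by rintro rfl; rw [h.grade_neg _ hβ] at hdγ; grind)
  have hw' : w' ∈ W0 Δ d Pos := ⟨hw'W, fun γ hγ =>
    (hpres γ (h.pos_subset hγ.1) (by rw [hγ.2]; simp)).mpr (hw.1.2 γ hγ)⟩
  have hneg : ∀ γ ∈ level Δ d 1, (-(w' γ) ∈ Pos ↔ -(w γ) ∈ Pos) := fun γ hγ => by
    simpa only [map_neg] using
      hpres (-γ) (h.neg_mem γ hγ.1) (by rw [h.grade_neg γ hγ.1, hγ.2]; simp)
  have hI : invSet Pos w' ∩ level Δ d 1 = invSet Pos w ∩ level Δ d 1 := by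
    ext γ
    exact ⟨fun ⟨hγ, hγ₁⟩ => ⟨⟨hγ.1, (hneg γ hγ₁).mp hγ.2⟩, hγ₁⟩,
      fun ⟨hγ, hγ₁⟩ => ⟨⟨hγ.1, (hneg γ hγ₁).mpr hγ.2⟩, hγ₁⟩⟩
  have hβN : w.symm α ∈ invSet Pos w' := ⟨h.compatible _ hβ (by omega), by
    simpa [w', sref_self (h.nonzero α hαΔ)] using hα.1⟩
  exact h.neg_notMem_pos hα.1 (by simpa using (hw.2 w' hw' hI hβN).2)

end GradedRootSystem

/-- `W⁰_max = {w ∈ W⁰ : w⁻¹(α) ∈ Δ(≤ 1) for all simple roots α}`. -/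
theorem stmt11 (Δ : Set V) (d : V → ℤ) (Pos : Set V)
    (h : GradedRootSystem Δ d Pos) :
    Wmax Δ d Pos =
      {w ∈ W0 Δ d Pos | ∀ α ∈ simpleRoots Pos, w.symm α ∈ levelLE Δ d 1} := by
  ext w
  constructor
  · exact fun hw => ⟨hw.1, fun α hα => h.symm_mem_levelLE_of_mem_Wmax hw hα⟩
  · exact fun ⟨hw, hsimple⟩ => ⟨hw, fun w' hw' hI => h.invSet_subset_of_levelLE hw.1 hsimple hw' hI⟩
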